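/- Let (θ₁, θ₂) be the minimizer in Lemma 1 with λ₂ = 0. Then ‖(θ₁, θ₂)‖₂ = (√(b₁² + s(b₂, λ₃)²) − λ₁)₊, i.e., the Euclidean norm of the minimizer equals the positive part of the norm of the soft-thresholded input minus λ₁. -/

import Mathlib

/-!
Write `c = s(b₂, λ₃)` and `ρ = ‖(b₁, c)‖`. Since `t₂ b₂ - λ₃ |t₂| ≤ |t₂| |c|`, Cauchy–Schwarz
bounds the objective below by `‖b‖²/2 + (r² - 2 (ρ - λ₁) r)/2`, where `r = ‖t‖`, and this bound
is attained along the ray through `(b₁, c)`, at the point of norm `(ρ - λ₁)₊`. As the quadratic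
`r ↦ r² - 2 a r` has `a₊` as its unique minimizer on `[0, ∞)`, every minimizer has norm `(ρ - λ₁)₊`.
-/

noncomputable def softThreshold (x l : ℝ) : ℝ := Real.sign x * max (|x| - l) 0

noncomputable def objective (b₁ b₂ l₁ l₃ t₁ t₂ : ℝ) : ℝ :=
  (1/2) * ((t₁ - b₁)^2 + (t₂ - b₂)^2) + l₁ * √(t₁^2 + t₂^2) + l₃ * |t₂|

lemma max_zero_mul (a : ℝ) : max a 0 * a = max a 0 ^ 2 := by
  rcases le_total a 0 with h | h
  · simp [max_eq_right h]
  · rw [max_eq_left h, sq]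

lemma eq_max_zero_of_sq_sub_le {a r : ℝ} (hr : 0 ≤ r)
    (h : r ^ 2 - 2 * a * r ≤ max a 0 ^ 2 - 2 * a * max a 0) : r = max a 0 := by
  have hm := max_zero_mul a
  have har : a * r ≤ max a 0 * r := mul_le_mul_of_nonneg_right (le_max_left a 0) hr
  have : (r - max a 0) ^ 2 ≤ 0 := by nlinarith
  exact sub_eq_zero.mp (pow_eq_zero_iff two_ne_zero |>.mp (this.antisymm (sq_nonneg _)))

lemma mul_add_mul_le_sqrt_mul_sqrt (a b c d : ℝ) :
    a * c + b * d ≤ √(a ^ 2 + b ^ 2) * √(c ^ 2 + d ^ 2) := by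
  rw [← Real.sqrt_mul (by positivity)]
  exact (le_abs_self _).trans (Real.abs_le_sqrt (by nlinarith [sq_nonneg (a * d - b * c)]))

section softThreshold

variable {l : ℝ} (x : ℝ)

lemma abs_softThreshold (hl : 0 ≤ l) : |softThreshold x l| = max (|x| - l) 0 := by
  rcases lt_trichotomy x 0 with hx | rfl | hx
  · simp [softThreshold, Real.sign_of_neg hx]
  · simp [softThreshold, hl]
  · simp [softThreshold, Real.sign_of_pos hx]

lemma softThreshold_mul_sub_mul_abs (hl : 0 ≤ l) :
    softThreshold x l * x - l * |softThreshold x l| = softThreshold x l ^ 2 := by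
  have hsx : softThreshold x l * x = max (|x| - l) 0 * |x| := by
    rcases lt_trichotomy x 0 with hx | rfl | hx
    · rw [softThreshold, Real.sign_of_neg hx, abs_of_neg hx]; ring
    · simp [softThreshold]
    · rw [softThreshold, Real.sign_of_pos hx, abs_of_pos hx]; ring
  rw [hsx, ← sq_abs, abs_softThreshold x hl, ← max_zero_mul]
  ring

lemma mul_sub_mul_abs_le_abs_mul_abs_softThreshold (hl : 0 ≤ l) (t : ℝ) :
    t * x - l * |t| ≤ |t| * |softThreshold x l| := by
  rw [abs_softThreshold x hl]
  calc t * x - l * |t| ≤ |t| * (|x| - l) := by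
        nlinarith [abs_mul t x, le_abs_self (t * x)]
    _ ≤ |t| * max (|x| - l) 0 := mul_le_mul_of_nonneg_left (le_max_left _ _) (abs_nonneg t)

end softThreshold

section objective

variable (b₁ b₂ l₁ : ℝ) {l₃ : ℝ} (hl₃ : 0 ≤ l₃)
include hl₃

lemma objective_ge (t₁ t₂ : ℝ) :
    (b₁ ^ 2 + b₂ ^ 2) / 2 + (√(t₁ ^ 2 + t₂ ^ 2) ^ 2
        - 2 * (√(b₁ ^ 2 + softThreshold b₂ l₃ ^ 2) - l₁) * √(t₁ ^ 2 + t₂ ^ 2)) / 2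
      ≤ objective b₁ b₂ l₁ l₃ t₁ t₂ := by
  have hthr := mul_sub_mul_abs_le_abs_mul_abs_softThreshold b₂ hl₃ t₂
  have hcs := mul_add_mul_le_sqrt_mul_sqrt t₁ |t₂| b₁ |softThreshold b₂ l₃|
  simp only [sq_abs] at hcs
  rw [Real.sq_sqrt (by positivity), objective]
  nlinarith

lemma objective_smul {k : ℝ} (hk : 0 ≤ k) :
    objective b₁ b₂ l₁ l₃ (k * b₁) (k * softThreshold b₂ l₃)
      = (b₁ ^ 2 + b₂ ^ 2) / 2 + ((k * √(b₁ ^ 2 + softThreshold b₂ l₃ ^ 2)) ^ 2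
        - 2 * (√(b₁ ^ 2 + softThreshold b₂ l₃ ^ 2) - l₁)
          * (k * √(b₁ ^ 2 + softThreshold b₂ l₃ ^ 2))) / 2 := by
  set c := softThreshold b₂ l₃
  have hc := softThreshold_mul_sub_mul_abs b₂ hl₃
  have hnorm : √((k * b₁) ^ 2 + (k * c) ^ 2) = k * √(b₁ ^ 2 + c ^ 2) := by
    rw [show (k * b₁) ^ 2 + (k * c) ^ 2 = k ^ 2 * (b₁ ^ 2 + c ^ 2) by ring,
      Real.sqrt_mul (sq_nonneg k), Real.sqrt_sq hk]
  have hρ : √(b₁ ^ 2 + c ^ 2) ^ 2 = b₁ ^ 2 + c ^ 2 := Real.sq_sqrt (by positivity)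
  rw [objective, hnorm, abs_mul, abs_of_nonneg hk]
  linear_combination (k - k ^ 2 / 2) * hρ - k * hc

end objective

/-- With λ₂ = 0, the norm of the Lemma 1 minimizer equals the positive part of
the norm of the soft-thresholded input minus λ₁. -/
theorem minimizer_norm_formula (b₁ b₂ lam1 lam3 θ₁ θ₂ : ℝ)
    (h1 : 0 < lam1) (h3 : 0 < lam3)
    (hmin : ∀ t₁ t₂ : ℝ,
      (1/2) * ((θ₁ - b₁)^2 + (θ₂ - b₂)^2) + lam1 * Real.sqrt (θ₁^2 + θ₂^2) + lam3 * |θ₂|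
        ≤ (1/2) * ((t₁ - b₁)^2 + (t₂ - b₂)^2) + lam1 * Real.sqrt (t₁^2 + t₂^2) + lam3 * |t₂|) :
    Real.sqrt (θ₁^2 + θ₂^2)
      = max (Real.sqrt (b₁^2 + (Real.sign b₂ * max (|b₂| - lam3) 0)^2) - lam1) 0 := by
  change √(θ₁ ^ 2 + θ₂ ^ 2) = max (√(b₁ ^ 2 + softThreshold b₂ lam3 ^ 2) - lam1) 0
  set ρ := √(b₁ ^ 2 + softThreshold b₂ lam3 ^ 2)
  set m := max (ρ - lam1) 0
  -- for `ρ = 0` this uses `m / 0 = 0` together with `m = 0`, as `λ₁ > 0`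
  have hmρ : m / ρ * ρ = m := by
    rcases eq_or_ne ρ 0 with hρ | hρ
    · simp [m, hρ, h1.le]
    · exact div_mul_cancel₀ m hρ
  have hk : 0 ≤ m / ρ := div_nonneg (le_max_right _ _) (Real.sqrt_nonneg _)
  have hbound : objective b₁ b₂ lam1 lam3 θ₁ θ₂
      ≤ objective b₁ b₂ lam1 lam3 (m / ρ * b₁) (m / ρ * softThreshold b₂ lam3) := hmin _ _
  rw [objective_smul b₁ b₂ lam1 h3.le hk, hmρ] at hbound
  have hlower := objective_ge b₁ b₂ lam1 h3.le θ₁ θ₂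
  exact eq_max_zero_of_sq_sub_le (Real.sqrt_nonneg _) (by linarith)
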